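/- arXiv:2401.11979 — 2 statements merged into one kernel-verified Lean document; each statement's English description precedes it below -/
import Mathlib

section
/- Let R be a ring and C a class of right R-modules closed under submodules and homomorphic images. If C is preenveloping, then there exists a two-sided ideal I of R such that C is precisely the class of right R-modules annihilated by I (equivalently, C = Mod-(R/I)). -/
universe u

/-- A class of modules is preenveloping if every module has a `C`-preenvelope. -/
def Preenveloping {R : Type u} [Ring R] (C : ModuleCat.{u} R → Prop) : Prop :=
  ∀ M : ModuleCat.{u} R, ∃ (E : ModuleCat.{u} R) (f : ↥M →ₗ[R] ↥E), C E ∧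
    ∀ (E' : ModuleCat.{u} R), C E' → ∀ g : ↥M →ₗ[R] ↥E',
      ∃ h : ↥E →ₗ[R] ↥E', h.comp f = g

/-- A class of modules is closed under submodules (up to isomorphism). -/
def ClosedUnderSubmodules {R : Type u} [Ring R] (C : ModuleCat.{u} R → Prop) : Prop :=
  ∀ (M : ModuleCat.{u} R), C M → ∀ (N : ModuleCat.{u} R) (i : ↥N →ₗ[R] ↥M),
    Function.Injective i → C N

/-- A class of modules is closed under homomorphic images. -/
def ClosedUnderImages {R : Type u} [Ring R] (C : ModuleCat.{u} R → Prop) : Prop :=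
  ∀ (M : ModuleCat.{u} R), C M → ∀ (N : ModuleCat.{u} R) (g : ↥M →ₗ[R] ↥N),
    Function.Surjective g → C N

theorem preenveloping_closed_sub_quot_eq_annihilated {R : Type u} [Ring R]
    (C : ModuleCat.{u} R → Prop) (hsub : ClosedUnderSubmodules C)
    (himg : ClosedUnderImages C) (henv : Preenveloping C) :
    ∃ I : TwoSidedIdeal R, ∀ M : ModuleCat.{u} R,
      C M ↔ ∀ a ∈ I, ∀ x : ↥M, a • x = 0 := by
  classical
  -- the common annihilator of all modules in `C`
  set S : Set R := {a : R | ∀ M : ModuleCat.{u} R, C M → ∀ x : ↥M, a • x = 0} with hS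
  have hzero : (0 : R) ∈ S := fun M _ x => zero_smul R x
  have hadd : ∀ {a b : R}, a ∈ S → b ∈ S → a + b ∈ S := fun {a b} ha hb M hM x => by
    rw [add_smul, ha M hM x, hb M hM x, add_zero]
  have hneg : ∀ {a : R}, a ∈ S → -a ∈ S := fun {a} ha M hM x => by
    rw [neg_smul, ha M hM x, neg_zero]
  have hmulL : ∀ {a b : R}, b ∈ S → a * b ∈ S := fun {a b} hb M hM x => by
    rw [mul_smul, hb M hM x, smul_zero]
  have hmulR : ∀ {a b : R}, a ∈ S → a * b ∈ S := fun {a b} ha M hM x => by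
    rw [mul_smul]; exact ha M hM (b • x)
  refine ⟨TwoSidedIdeal.mk' S hzero hadd hneg hmulL hmulR, fun M => ?_⟩
  constructor
  · intro hM a ha x
    rw [TwoSidedIdeal.mem_mk'] at ha
    exact ha M hM x
  · intro hM
    -- take a preenvelope of R and let K be its kernel
    obtain ⟨E, f₀, hE, hfact⟩ := henv (ModuleCat.of R R)
    let f : R →ₗ[R] ↥E := f₀
    set K : Submodule R R := LinearMap.ker f with hK
    -- the kernel of f coincides with S
    have hKS : ∀ a : R, a ∈ K ↔ a ∈ S := by
      intro a
      constructor
      · intro haK N hN x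
        obtain ⟨h, hh⟩ := hfact N hN (LinearMap.toSpanSingleton R ↥N x)
        have : h (f a) = a • x := by
          have := congrArg (fun φ => φ a) hh
          simpa [LinearMap.toSpanSingleton_apply] using this
        rw [LinearMap.mem_ker.mp haK, map_zero] at this
        exact this.symm
      · intro haS
        have : f a = a • f 1 := by
          conv_lhs => rw [show a = a • (1 : R) by rw [smul_eq_mul, mul_one]]
          exact map_smul f a 1
        rw [LinearMap.mem_ker, this]
        exact haS E hE (f 1)
    -- R ⧸ K belongs to C
    have hQ : C (ModuleCat.of R (R ⧸ K)) := by
      refine hsub E hE (ModuleCat.of R (R ⧸ K)) (K.liftQ f le_rfl) ?_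
      rw [← LinearMap.ker_eq_bot]
      exact Submodule.ker_liftQ_eq_bot K f le_rfl le_rfl
    -- the direct sum of copies of R ⧸ K indexed by M belongs to C
    have hD : C (ModuleCat.of R (↥M →₀ (R ⧸ K))) := by
      obtain ⟨ED, fD, hED, hfactD⟩ := henv (ModuleCat.of R (↥M →₀ (R ⧸ K)))
      refine hsub ED hED _ fD ?_
      rw [← LinearMap.ker_eq_bot]
      refine (Submodule.eq_bot_iff _).mpr fun v hv => ?_
      let w : ↥M →₀ R ⧸ K := v
      have hv0 : ∀ x : ↥M, w x = 0 := ?_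
      · exact Finsupp.ext hv0
      intro x
      obtain ⟨h, hh⟩ := hfactD (ModuleCat.of R (R ⧸ K)) hQ (Finsupp.lapply x)
      have : h (fD v) = w x := by
        have := congrArg (fun φ => φ v) hh
        simpa using this
      rw [LinearMap.mem_ker.mp hv, map_zero] at this
      exact this.symm
    -- M is a homomorphic image of that direct sum
    have hle : ∀ x : ↥M, K ≤ LinearMap.ker (LinearMap.toSpanSingleton R ↥M x) := by
      intro x a ha
      rw [LinearMap.mem_ker, LinearMap.toSpanSingleton_apply]
      exact hM a (TwoSidedIdeal.mem_mk' S hzero hadd hneg hmulL hmulR a |>.mpr ((hKS a).mp ha)) x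
    let φ : ↥M → (R ⧸ K) →ₗ[R] ↥M := fun x => K.liftQ (LinearMap.toSpanSingleton R ↥M x) (hle x)
    refine himg _ hD M (Finsupp.lsum ℕ φ) fun x => ?_
    refine ⟨Finsupp.single x (Submodule.Quotient.mk 1), ?_⟩
    show Finsupp.lsum ℕ φ (Finsupp.single x (Submodule.Quotient.mk (1 : R))) = x
    rw [Finsupp.lsum_single]
    show (1 : R) • x = x
    exact one_smul R x
end

section
/- Assume there exists a functor G from the category of graphs to abelian groups inducing natural isomorphisms ℤ^(Hom(X,Y)) ≅ Hom_ℤ(G(X), G(Y)) (the free abelian group on the hom-set), with all G(X) nonzero. If (X_α)_{α ∈ Ord} is a family of graphs such that Hom(X_α, X_β) ≠ ∅ iff α ≥ β, and C is the class of abelian groups generated by {G(X_α) : α ∈ Ord} (epimorphic images of direct sums of copies of these groups), then there is no abelian group M with C = Gen(M). -/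
universe u

/-- A graph: a type of vertices with a binary edge relation. -/
structure Graph' : Type (u + 1) where
  V : Type u
  E : V → V → Prop

/-- Graph homomorphisms: edge-preserving maps. -/
def GraphHom (X Y : Graph'.{u}) : Type u :=
  { f : X.V → Y.V // ∀ a b, X.E a b → Y.E (f a) (f b) }

/-- `Gen M` for abelian groups: epimorphic images of direct sums of copies of `M`. -/
def GenClass (M N : AddCommGrpCat.{u}) : Prop :=
  ∃ (ι : Type u) (g : (DirectSum ι (fun _ : ι => ↥M)) →+ ↥N), Function.Surjective g

/-!
If `C = Gen M`, then `M ∈ C` is a quotient of `⨁ᵢ G(X_{oᵢ})`, and for `α` strictly above every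
`oᵢ` the nonzero group `G(X_α) ∈ C` receives a nonzero map from `M`. Composing, some
`G(X_{oᵢ}) → G(X_α)` is nonzero; but `Hom(X_{oᵢ}, X_α) = ∅`, so `Hom(G(X_{oᵢ}), G(X_α)) ≅ ℤ^∅ = 0`.
-/

open DirectSum

theorem AddMonoidHom.ne_zero_of_surjective {A B : Type*} [AddZeroClass A] [AddZeroClass B]
    [Nontrivial B] {g : A →+ B} (hg : Function.Surjective g) : g ≠ 0 := by
  rintro rfl
  obtain ⟨x, y, hxy⟩ := exists_pair_ne B
  obtain ⟨a, rfl⟩ := hg x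
  obtain ⟨b, rfl⟩ := hg y
  exact hxy rfl

theorem DirectSum.exists_comp_of_ne_zero {ι : Type*} [DecidableEq ι] {β : ι → Type*}
    [∀ i, AddCommMonoid (β i)] {N : Type*} [AddCommMonoid N] {g : (⨁ i, β i) →+ N}
    (hg : g ≠ 0) : ∃ i, g.comp (of β i) ≠ 0 := by
  by_contra! h
  exact hg (addHom_ext' fun i => by rw [h i, AddMonoidHom.zero_comp])

theorem genClass_self (M : AddCommGrpCat.{u}) : GenClass M M :=
  ⟨PUnit, toAddMonoid fun _ => AddMonoidHom.id M, fun m =>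
    ⟨of _ PUnit.unit m, toAddMonoid_of _ _ _⟩⟩

theorem GenClass.exists_ne_zero {M N : AddCommGrpCat.{u}} [Nontrivial N] (h : GenClass M N) :
    ∃ φ : M →+ N, φ ≠ 0 := by
  classical
  obtain ⟨ι, g, hg⟩ := h
  obtain ⟨i, hi⟩ := exists_comp_of_ne_zero (AddMonoidHom.ne_zero_of_surjective hg)
  exact ⟨_, hi⟩

theorem DirectSum.exists_comp_comp_of_ne_zero {ι : Type*} [DecidableEq ι] {β : ι → Type*}
    [∀ i, AddCommMonoid (β i)] {M N : Type*} [AddCommMonoid M] [AddCommMonoid N]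
    {g : (⨁ i, β i) →+ M} (hg : Function.Surjective g) {φ : M →+ N} (hφ : φ ≠ 0) :
    ∃ i, (φ.comp g).comp (of β i) ≠ 0 :=
  exists_comp_of_ne_zero fun h => hφ <| (AddMonoidHom.cancel_right hg).1 <| by
    rw [h, AddMonoidHom.zero_comp]

theorem no_single_generator_of_ordinal_indexed_system_general
    (G : Graph'.{u} → AddCommGrpCat.{u})
    -- the natural isomorphism `ℤ^(Hom(X,Y)) ≅ Hom_ℤ(G X, G Y)`
    (e : ∀ X Y : Graph'.{u}, FreeAbelianGroup (GraphHom X Y) ≃+ (↥(G X) →+ ↥(G Y)))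
    -- all the groups `G X` are nonzero
    (hGnz : ∀ X : Graph'.{u}, Nontrivial ↥(G X))
    -- an `Ord`-indexed family of graphs with `Hom(X_α, X_β) ≠ ∅ ↔ α ≥ β`
    (X : Ordinal.{u} → Graph'.{u})
    (hX : ∀ α β : Ordinal.{u}, Nonempty (GraphHom (X α) (X β)) ↔ β ≤ α)
    -- `C` is the class of abelian groups generated by the groups `G (X α)`
    (C : AddCommGrpCat.{u} → Prop)
    (hC : ∀ N : AddCommGrpCat.{u}, C N ↔ ∃ (ι : Type u) (o : ι → Ordinal.{u})
      (g : (DirectSum ι (fun i => ↥(G (X (o i))))) →+ ↥N), Function.Surjective g) :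
    ¬ ∃ M : AddCommGrpCat.{u}, ∀ N, C N ↔ GenClass M N := by
  classical
  rintro ⟨M, hM⟩
  obtain ⟨ι, o, g, hg⟩ := (hC M).1 ((hM M).2 (genClass_self M))
  set α := ⨆ i, o i + 1
  obtain ⟨κ, p, hp⟩ := genClass_self (G (X α))
  have := hGnz (X α)
  obtain ⟨φ, hφ⟩ := ((hM _).1 ((hC _).2 ⟨κ, fun _ => α, p, hp⟩)).exists_ne_zero
  obtain ⟨i, hi⟩ := exists_comp_comp_of_ne_zero hg hφ
  have : IsEmpty (GraphHom (X (o i)) (X α)) := by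
    rw [← not_nonempty_iff, hX]
    exact not_le.2 (Ordinal.lt_iSup_add_one o i)
  exact hi ((e _ _).toEquiv.symm.subsingleton.elim _ _)

theorem no_single_generator_of_ordinal_indexed_system
    (G : Graph'.{u} → AddCommGrpCat.{u})
    (Gmap : ∀ {X Y : Graph'.{u}}, GraphHom X Y → (↥(G X) →+ ↥(G Y)))
    -- the natural isomorphism `ℤ^(Hom(X,Y)) ≅ Hom_ℤ(G X, G Y)`
    (e : ∀ X Y : Graph'.{u}, FreeAbelianGroup (GraphHom X Y) ≃+ (↥(G X) →+ ↥(G Y)))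
    (he : ∀ (X Y : Graph'.{u}) (f : GraphHom X Y), e X Y (FreeAbelianGroup.of f) = Gmap f)
    -- all the groups `G X` are nonzero
    (hGnz : ∀ X : Graph'.{u}, Nontrivial ↥(G X))
    -- an `Ord`-indexed family of graphs with `Hom(X_α, X_β) ≠ ∅ ↔ α ≥ β`
    (X : Ordinal.{u} → Graph'.{u})
    (hX : ∀ α β : Ordinal.{u}, Nonempty (GraphHom (X α) (X β)) ↔ β ≤ α)
    -- `C` is the class of abelian groups generated by the groups `G (X α)`
    (C : AddCommGrpCat.{u} → Prop)
    (hC : ∀ N : AddCommGrpCat.{u}, C N ↔ ∃ (ι : Type u) (o : ι → Ordinal.{u})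
      (g : (DirectSum ι (fun i => ↥(G (X (o i))))) →+ ↥N), Function.Surjective g) :
    ¬ ∃ M : AddCommGrpCat.{u}, ∀ N, C N ↔ GenClass M N :=
  no_single_generator_of_ordinal_indexed_system_general G e hGnz X hX C hC
end
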